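/- The Lobachevsky function satisfies the duplication identity: for every real θ, Λ(2θ) = 2Λ(θ) + 2Λ(θ + π/2). -/

import Mathlib

/-!
Since `2 sin 2t = (2 sin t)(2 cos t)` and `cos t = sin (t + π/2)`, the integrand satisfies
`log |2 sin 2t| = log |2 sin t| + log |2 sin (t + π/2)|` away from the null set of zeros of
`sin 2t`. Integrating over `[0, θ]` and substituting `t ↦ 2t` and `t ↦ t + π/2` gives
`Λ(2θ) = 2Λ(θ) + 2(Λ(θ + π/2) - Λ(π/2))`, and `Λ(π/2) = 0` is Euler's
`∫₀^{π/2} log sin t dt = -(π/2) log 2`.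
-/

open Real MeasureTheory

/-- The Lobachevsky function `Λ(θ) = −∫₀^θ log |2 sin t| dt`. -/
noncomputable def lob (θ : ℝ) : ℝ := - ∫ t in (0:ℝ)..θ, Real.log |2 * Real.sin t|

open intervalIntegral

theorem intervalIntegrable_log_abs_two_mul_sin (a b : ℝ) :
    IntervalIntegrable (fun t => log |2 * sin t|) volume a b :=
  (analyticOnNhd_const.mul analyticOnNhd_sin).meromorphicOn.intervalIntegrable_log_norm

theorem ae_sin_mul_ne_zero {c : ℝ} (hc : c ≠ 0) : ∀ᵐ t : ℝ, sin (c * t) ≠ 0 := by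
  have hzeros : {t : ℝ | sin (c * t) = 0} ⊆ Set.range fun n : ℤ => n * π / c := by
    rintro t ht
    obtain ⟨n, hn⟩ := sin_eq_zero_iff.1 ht
    exact ⟨n, by simp only; rw [hn]; field_simp⟩
  simpa only [ae_iff, ne_eq, not_not] using
    measure_mono_null hzeros ((Set.countable_range _).measure_zero volume)

theorem log_abs_two_mul_sin_two_mul {t : ℝ} (h : sin (2 * t) ≠ 0) :
    log |2 * sin (2 * t)| = log |2 * sin t| + log |2 * sin (t + π / 2)| := by
  rw [sin_two_mul] at h
  have hsin : 2 * sin t ≠ 0 := by simp_all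
  have hcos : 2 * cos t ≠ 0 := by simp_all
  rw [sin_add_pi_div_two, log_abs, log_abs, log_abs, ← log_mul hsin hcos, sin_two_mul]
  ring_nf

theorem lob_two_mul_eq (θ : ℝ) :
    lob (2 * θ) = 2 * lob θ + 2 * (lob (θ + π / 2) - lob (π / 2)) := by
  set f : ℝ → ℝ := fun t => log |2 * sin t| with hf
  have hint : ∀ a b, IntervalIntegrable f volume a b := intervalIntegrable_log_abs_two_mul_sin
  have hscale : ∫ t in (0:ℝ)..2 * θ, f t = 2 * ∫ t in (0:ℝ)..θ, f (2 * t) := by simp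
  have hdouble : ∫ t in (0:ℝ)..θ, f (2 * t) =
      (∫ t in (0:ℝ)..θ, f t) + ∫ t in (0:ℝ)..θ, f (t + π / 2) := by
    have hint_shift : IntervalIntegrable (fun t => f (t + π / 2)) volume 0 θ := by
      simpa using (hint (π / 2) (θ + π / 2)).comp_add_right (π / 2)
    rw [← integral_add (hint 0 θ) hint_shift]
    refine integral_congr_ae ?_
    filter_upwards [ae_sin_mul_ne_zero two_ne_zero] with t ht _
    exact log_abs_two_mul_sin_two_mul ht
  have hshift : ∫ t in (0:ℝ)..θ, f (t + π / 2) =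
      (∫ t in (0:ℝ)..θ + π / 2, f t) - ∫ t in (0:ℝ)..π / 2, f t := by
    rw [integral_interval_sub_left (hint _ _) (hint _ _)]
    simp
  simp only [lob, ← hf, hscale, hdouble, hshift]
  ring

theorem lob_pi_div_two : lob (π / 2) = 0 := by
  have hsplit : ∫ t in (0:ℝ)..π / 2, log |2 * sin t| =
      ∫ t in (0:ℝ)..π / 2, (log 2 + log (sin t)) := by
    refine integral_congr_ae (Filter.Eventually.of_forall fun t ht => ?_)
    rw [Set.uIoc_of_le (by positivity)] at ht
    have hsin : 0 < sin t := sin_pos_of_pos_of_lt_pi ht.1 (by linarith [ht.2, pi_pos])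
    rw [abs_of_pos (by positivity), log_mul two_ne_zero hsin.ne']
  rw [lob, hsplit,
    integral_add (g := fun t => log (sin t)) intervalIntegrable_const intervalIntegrable_log_sin,
    intervalIntegral.integral_const, integral_log_sin_zero_pi_div_two]
  simp only [sub_zero, smul_eq_mul]
  ring

/-- The duplication identity for the Lobachevsky function:
`Λ(2θ) = 2Λ(θ) + 2Λ(θ + π/2)` for every real `θ`. -/
theorem lob_duplication (θ : ℝ) :
    lob (2 * θ) = 2 * lob θ + 2 * lob (θ + Real.pi / 2) := by
  rw [lob_two_mul_eq, lob_pi_div_two, sub_zero]
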